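/- arXiv:2401.05185 — 9 statements merged into one kernel-verified Lean document; each statement's English description precedes it below -/
import Mathlib

section
/- Every quasi-component of a quasi-spectral space is connected. That is, if X is a quasi-compact topological space with a basis of quasi-compact open sets such that the intersection of any two basis members is quasi-compact, then for every x ∈ X the intersection of all clopen subsets of X containing x is a connected subset of X. -/
/-!
Let `T` be the quasi-component of `x` and suppose `T ⊆ u ∪ v` with `u ∋ x` and `v` disjoint and
closed. Cover the compact sets `T ∩ u` and `T ∩ v` by compact opens `W ⊆ vᶜ` and `W' ⊆ uᶜ`. The sets
`(W ∪ W')ᶜ` and `W ∩ W'` are compact (the latter by quasi-separatedness) and miss `T`, so by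
compactness a single clopen `U ∋ x` misses them as well. Then `U ∩ W = U \ W'` is clopen, hence
contains `T`, and so `T` misses `v`.
-/

open Set

section

variable {X : Type*} [TopologicalSpace X]

def quasiComponent (x : X) : Set X := ⋂₀ {A : Set X | IsClopen A ∧ x ∈ A}

lemma mem_quasiComponent_self (x : X) : x ∈ quasiComponent x := fun _ hA ↦ hA.2

lemma isClosed_quasiComponent (x : X) : IsClosed (quasiComponent x) :=
  isClosed_sInter fun _ hA ↦ hA.1.isClosed

lemma quasiComponent_subset {x : X} {A : Set X} (hA : IsClopen A) (hx : x ∈ A) :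
    quasiComponent x ⊆ A :=
  sInter_subset_of_mem ⟨hA, hx⟩

lemma exists_isClopen_disjoint_of_disjoint_quasiComponent {x : X} {K : Set X} (hK : IsCompact K)
    (hKx : Disjoint K (quasiComponent x)) : ∃ U, IsClopen U ∧ x ∈ U ∧ Disjoint U K := by
  rw [quasiComponent, sInter_eq_iInter, disjoint_iff_inter_eq_empty] at hKx
  obtain ⟨s, hs⟩ := hK.elim_finite_subfamily_closed _ (fun A ↦ A.2.1.isClosed) hKx
  refine ⟨⋂ A ∈ s, A.1, isClopen_biInter_finset fun A _ ↦ A.2.1,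
    mem_iInter₂.2 fun A _ ↦ A.2.2, ?_⟩
  rwa [disjoint_comm, disjoint_iff_inter_eq_empty]

lemma IsClopen.inter_of_subset_union {U W W' : Set X} (hU : IsClopen U) (hW : IsOpen W)
    (hW' : IsOpen W') (hUWW' : U ⊆ W ∪ W') (hdisj : Disjoint U (W ∩ W')) :
    IsClopen (U ∩ W) := by
  have hUW : U ∩ W = U \ W' := by
    ext z
    exact ⟨fun h ↦ ⟨h.1, fun hzW' ↦ hdisj.notMem_of_mem_left h.1 ⟨h.2, hzW'⟩⟩,
      fun h ↦ ⟨h.1, (hUWW' h.1).resolve_right h.2⟩⟩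
  exact ⟨hUW ▸ hU.isClosed.sdiff hW', hU.isOpen.inter hW⟩

variable [CompactSpace X] [PrespectralSpace X] [QuasiSeparatedSpace X]

lemma quasiComponent_subset_of_subset_union {x : X} {u v : Set X} (hu : IsClosed u)
    (hv : IsClosed v) (huv : Disjoint u v) (hTuv : quasiComponent x ⊆ u ∪ v) (hx : x ∈ u) :
    quasiComponent x ⊆ u := by
  set T := quasiComponent x
  have hT := isClosed_quasiComponent x
  obtain ⟨W, hWc, hWo, hTW, hWv⟩ := PrespectralSpace.exists_isCompact_and_isOpen_between
    (hT.inter hu).isCompact hv.isOpen_compl (inter_subset_right.trans huv.subset_compl_right)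
  obtain ⟨W', hW'c, hW'o, hTW', hW'u⟩ := PrespectralSpace.exists_isCompact_and_isOpen_between
    (hT.inter hv).isCompact hu.isOpen_compl (inter_subset_right.trans huv.subset_compl_left)
  have hK : IsCompact ((W ∪ W')ᶜ ∪ W ∩ W') :=
    (hWo.union hW'o).isClosed_compl.isCompact.union
      (QuasiSeparatedSpace.inter_isCompact W W' hWo hWc hW'o hW'c)
  have hKT : Disjoint ((W ∪ W')ᶜ ∪ W ∩ W') T := by
    refine disjoint_right.2 fun z hz ↦ ?_
    rcases hTuv hz with hzu | hzv
    · exact not_or.2 ⟨fun h ↦ h (.inl (hTW ⟨hz, hzu⟩)), fun h ↦ hW'u h.2 hzu⟩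
    · exact not_or.2 ⟨fun h ↦ h (.inr (hTW' ⟨hz, hzv⟩)), fun h ↦ hWv h.1 hzv⟩
  obtain ⟨U, hU, hxU, hUK⟩ := exists_isClopen_disjoint_of_disjoint_quasiComponent hK hKT
  rw [disjoint_union_right, disjoint_compl_right_iff_subset] at hUK
  have hTUW : T ⊆ U ∩ W := quasiComponent_subset (hU.inter_of_subset_union hWo hW'o hUK.1 hUK.2)
    ⟨hxU, hTW ⟨mem_quasiComponent_self x, hx⟩⟩
  exact fun z hz ↦ (hTuv hz).resolve_right (hWv (hTUW hz).2)

theorem isConnected_quasiComponent (x : X) : IsConnected (quasiComponent x) := by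
  refine ⟨⟨x, mem_quasiComponent_self x⟩, ?_⟩
  rw [isPreconnected_iff_subset_of_fully_disjoint_closed (isClosed_quasiComponent x)]
  intro u v hu hv hTuv huv
  rcases hTuv (mem_quasiComponent_self x) with hx | hx
  · exact .inl (quasiComponent_subset_of_subset_union hu hv huv hTuv hx)
  · exact .inr (quasiComponent_subset_of_subset_union hv hu huv.symm (union_comm u v ▸ hTuv) hx)

end

/-- Every quasi-component of a quasi-spectral space is connected. -/
theorem quasiComponent_isConnected_of_quasiSpectral
    {X : Type*} [TopologicalSpace X] [CompactSpace X]
    (B : Set (Set X)) (hB : TopologicalSpace.IsTopologicalBasis B)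
    (hBc : ∀ U ∈ B, IsCompact U)
    (hBi : ∀ U ∈ B, ∀ V ∈ B, IsCompact (U ∩ V))
    (x : X) :
    IsConnected (⋂₀ {A : Set X | IsClopen A ∧ x ∈ A}) := by
  have : PrespectralSpace X := .of_isTopologicalBasis hB hBc
  have : QuasiSeparatedSpace X :=
    .of_isTopologicalBasis (b := ((↑) : B → Set X)) (by rwa [Subtype.range_coe])
      fun U V ↦ hBi U U.2 V V.2
  exact isConnected_quasiComponent x
end

section
/- For a commutative ring R, the map from the Boolean ring of idempotents B(R) to Clop(Spec R) sending an idempotent e to the basic open set D(e) = {p ∈ Spec R : e ∉ p} is an isomorphism of Boolean rings. -/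
/-!
The clopens of `Spec R` are exactly the `D(e)` with `e` idempotent, `D` is injective on
idempotents, and `D(ee') = D(e) ∩ D(e')`. For `⊕`, an idempotent maps to `0` or `1` in the
domain `R ⧸ p`, and there `a + b - 2ab` is nonzero iff exactly one of `a, b` is `1`.
-/

theorem Ideal.Quotient.mk_eq_zero_or_one_of_isIdempotentElem {R : Type*} [CommRing R]
    (I : Ideal R) [I.IsPrime] {e : R} (he : IsIdempotentElem e) :
    Ideal.Quotient.mk I e = 0 ∨ Ideal.Quotient.mk I e = 1 :=
  IsIdempotentElem.iff_eq_zero_or_one.mp (he.map _)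

namespace PrimeSpectrum

variable {R : Type*} [CommRing R]

theorem coe_basicOpen_add_sub_two_mul {e e' : R} (he : IsIdempotentElem e)
    (he' : IsIdempotentElem e') :
    (basicOpen (e + e' - 2 * e * e') : Set (PrimeSpectrum R)) =
      symmDiff (basicOpen e : Set (PrimeSpectrum R)) (basicOpen e') := by
  ext p
  simp only [Set.mem_symmDiff, SetLike.mem_coe, mem_basicOpen,
    ← Ideal.Quotient.eq_zero_iff_mem, map_sub, map_add, map_mul, map_ofNat]
  rcases Ideal.Quotient.mk_eq_zero_or_one_of_isIdempotentElem p.asIdeal he with h | h <;>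
    rcases Ideal.Quotient.mk_eq_zero_or_one_of_isIdempotentElem p.asIdeal he' with h' | h' <;>
    · rw [h, h']
      norm_num

end PrimeSpectrum

open PrimeSpectrum in
/-- For a commutative ring `R`, the map `e ↦ D(e) = {p : e ∉ p}` from the Boolean ring of
idempotents of `R` to the Boolean ring of clopen subsets of `Spec R` is an isomorphism of
Boolean rings: it lands in clopens, it is bijective onto the clopens, and it transforms
the operations `e ⊕ e' = e + e' - 2ee'`, `e · e'  = ee'`, `0`, `1` into symmetric
difference, intersection, `∅` and the whole space respectively. -/
theorem idempotents_equiv_clopens_of_primeSpectrum (R : Type*) [CommRing R] :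
    let D : R → Set (PrimeSpectrum R) := fun e => {p | e ∉ p.asIdeal}
    (∀ e : R, IsIdempotentElem e → IsClopen (D e)) ∧
    (∀ e e' : R, IsIdempotentElem e → IsIdempotentElem e' → D e = D e' → e = e') ∧
    (∀ A : Set (PrimeSpectrum R), IsClopen A → ∃ e : R, IsIdempotentElem e ∧ D e = A) ∧
    (∀ e e' : R, IsIdempotentElem e → IsIdempotentElem e' →
      D (e + e' - 2 * e * e') = (D e ∪ D e') \ (D e ∩ D e')) ∧
    (∀ e e' : R, IsIdempotentElem e → IsIdempotentElem e' → D (e * e') = D e ∩ D e') ∧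
    D (0 : R) = ∅ ∧ D (1 : R) = Set.univ := by
  intro D
  have hD : ∀ e, D e = basicOpen e := fun _ => rfl
  simp only [hD]
  refine ⟨fun e he => isClopen_iff.mpr ⟨e, he, rfl⟩,
    fun e e' he he' h => basicOpen_injOn_isIdempotentElem he he' (SetLike.coe_injective h),
    fun A hA =>
      (exists_idempotent_basicOpen_eq_of_isClopen hA).imp fun _ ⟨he, h⟩ => ⟨he, h.symm⟩,
    fun e e' he he' => by
      rw [coe_basicOpen_add_sub_two_mul he he', symmDiff_eq_sup_sdiff_inf]; rfl,
    fun e e' _ _ => by rw [basicOpen_mul]; rfl,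
    by rw [basicOpen_zero]; rfl,
    by rw [basicOpen_one]; rfl⟩
end

section
/- Let X be a locally ringed space with R = O_X(X) its ring of global sections. The map from the Boolean ring of idempotents of R to the Boolean ring Clop(X) of clopen subsets of X, sending an idempotent s to X_s = {x ∈ X : the germ s_x is not in the maximal ideal of O_{X,x}}, is an isomorphism of Boolean rings. -/
/-!
The germ of an idempotent global section `s` at a point is an idempotent of a local ring, hence
`0` or `1`, and it is `1` exactly on `X_s`. Consequently `X_{1-s}` is the complement of `X_s`, so
`X_s` is clopen; an idempotent is determined by its germs, hence by `X_s`; and a clopen `V` is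
`X_s` for the section glued from `1` on `V` and `0` on its complement. The Boolean operations are
then compared pointwise on germs with values in `{0, 1}`.
-/

open AlgebraicGeometry CategoryTheory Opposite TopologicalSpace

namespace IsIdempotentElem

variable {A : Type*} [CommRing A] [IsLocalRing A] {e : A}

lemma isUnit_one_sub_iff (he : IsIdempotentElem e) : IsUnit (1 - e) ↔ ¬IsUnit e := by
  refine ⟨fun h he' ↦ ?_, IsLocalRing.isUnit_one_sub_self_of_mem_nonunits e⟩
  rw [(iff_eq_one_of_isUnit he').mp he, sub_self] at h
  exact not_isUnit_zero h

open Classical in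
lemma eq_ite_isUnit (he : IsIdempotentElem e) : e = if IsUnit e then 1 else 0 := by
  split_ifs with h
  · exact (iff_eq_one_of_isUnit h).mp he
  · have h1 : 1 - e = 1 := (iff_eq_one_of_isUnit (he.isUnit_one_sub_iff.mpr h)).mp he.one_sub
    linear_combination -h1

end IsIdempotentElem

open Classical in
lemma TopCat.Sheaf.exists_Γgerm_eq_ite_of_isClopen {X : TopCat} (F : X.Sheaf CommRingCat)
    {V : Set X} (hV : IsClopen V) :
    ∃ s : F.presheaf.obj (op ⊤), ∀ x, F.presheaf.Γgerm x s = if x ∈ V then 1 else 0 := by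
  let U : Opens X := ⟨V, hV.isOpen⟩
  let W : Opens X := ⟨Vᶜ, hV.isClosed.isOpen_compl⟩
  have hUW : (⊤ : Opens X) ≤ U ⊔ W := fun x _ ↦ _root_.em (x ∈ V)
  have compatible : F.presheaf.map (homOfLE inf_le_left : U ⊓ W ⟶ U).op 1 =
      F.presheaf.map (homOfLE inf_le_right : U ⊓ W ⟶ W).op 0 :=
    TopCat.Presheaf.section_ext F _ _ _ fun x hx ↦ absurd hx.1 hx.2
  let s₀ := (F.objSupIsoProdEqLocus U W).inv ⟨(1, 0), compatible⟩
  refine ⟨F.presheaf.map (homOfLE hUW).op s₀, fun x ↦ ?_⟩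
  have hsup : F.presheaf.germ (U ⊔ W) x (hUW True.intro) s₀ = if x ∈ V then 1 else 0 := by
    split_ifs with hx
    · rw [← F.presheaf.germ_res_apply (homOfLE le_sup_left : U ⟶ U ⊔ W) x hx,
        F.objSupIsoProdEqLocus_inv_fst, map_one]
    · rw [← F.presheaf.germ_res_apply (homOfLE le_sup_right : W ⟶ U ⊔ W) x hx,
        F.objSupIsoProdEqLocus_inv_snd, map_zero]
  exact (F.presheaf.germ_res_apply (homOfLE hUW) x _ s₀).trans hsup

namespace AlgebraicGeometry.LocallyRingedSpace

variable (X : LocallyRingedSpace) {s t : X.presheaf.obj (op ⊤)}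

open Classical in
lemma Γgerm_eq_ite_of_isIdempotentElem (hs : IsIdempotentElem s) (x : X) :
    X.presheaf.Γgerm x s = if x ∈ X.toRingedSpace.basicOpen s then 1 else 0 := by
  simpa only [X.toRingedSpace.mem_top_basicOpen] using
    (hs.map (X.presheaf.Γgerm x).hom).eq_ite_isUnit

lemma basicOpen_one_sub_of_isIdempotentElem (hs : IsIdempotentElem s) :
    (X.toRingedSpace.basicOpen (1 - s) : Set X.toPresheafedSpace) =
      (↑(X.toRingedSpace.basicOpen s))ᶜ := by
  ext x
  simp only [Set.mem_compl_iff, SetLike.mem_coe, X.toRingedSpace.mem_top_basicOpen, map_sub,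
    map_one]
  exact (hs.map (X.presheaf.Γgerm x).hom).isUnit_one_sub_iff

lemma isClopen_basicOpen_of_isIdempotentElem (hs : IsIdempotentElem s) :
    IsClopen (X.toRingedSpace.basicOpen s : Set X.toPresheafedSpace) := by
  refine ⟨?_, (X.toRingedSpace.basicOpen s).isOpen⟩
  rw [← isOpen_compl_iff, ← X.basicOpen_one_sub_of_isIdempotentElem hs]
  exact (X.toRingedSpace.basicOpen (1 - s)).isOpen

lemma basicOpen_injOn_isIdempotentElem :
    {s : X.presheaf.obj (op ⊤) | IsIdempotentElem s}.InjOn X.toRingedSpace.basicOpen :=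
  fun s hs t ht h ↦ TopCat.Presheaf.section_ext X.sheaf ⊤ s t fun x _ ↦ by
    change X.presheaf.Γgerm x s = X.presheaf.Γgerm x t
    rw [X.Γgerm_eq_ite_of_isIdempotentElem hs, X.Γgerm_eq_ite_of_isIdempotentElem ht, h]

open Classical in
lemma exists_isIdempotentElem_basicOpen_eq_of_isClopen {V : Set X.toPresheafedSpace}
    (hV : IsClopen V) : ∃ s : X.presheaf.obj (op ⊤),
      IsIdempotentElem s ∧ (X.toRingedSpace.basicOpen s : Set X.toPresheafedSpace) = V := by
  obtain ⟨s, hs⟩ : ∃ s : X.presheaf.obj (op ⊤),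
      ∀ x, X.presheaf.Γgerm x s = if x ∈ V then 1 else 0 :=
    X.sheaf.exists_Γgerm_eq_ite_of_isClopen hV
  have hidem : IsIdempotentElem s := TopCat.Presheaf.section_ext X.sheaf ⊤ _ _ fun x _ ↦ by
    change X.presheaf.Γgerm x (s * s) = X.presheaf.Γgerm x s
    rw [map_mul, hs]
    split_ifs <;> simp
  refine ⟨s, hidem, Set.ext fun x ↦ ?_⟩
  rw [SetLike.mem_coe, X.toRingedSpace.mem_top_basicOpen, hs]
  split_ifs with hx <;> simp [hx]

lemma basicOpen_add_sub_two_mul_of_isIdempotentElem (hs : IsIdempotentElem s)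
    (ht : IsIdempotentElem t) :
    (X.toRingedSpace.basicOpen (s + t - 2 * s * t) : Set X.toPresheafedSpace) =
      (X.toRingedSpace.basicOpen s ∪ X.toRingedSpace.basicOpen t : Set X.toPresheafedSpace) \
        (X.toRingedSpace.basicOpen s ∩ X.toRingedSpace.basicOpen t) := by
  ext x
  rw [SetLike.mem_coe, X.toRingedSpace.mem_top_basicOpen, map_sub, map_add, map_mul, map_mul,
    map_ofNat, X.Γgerm_eq_ite_of_isIdempotentElem hs, X.Γgerm_eq_ite_of_isIdempotentElem ht]
  split_ifs with hxs hxt hxt <;> norm_num [hxs, hxt]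

end AlgebraicGeometry.LocallyRingedSpace

/-- For a locally ringed space `X` with ring of global sections `R`, the map sending an
idempotent `s` of `R` to the set `X_s` of points where the germ of `s` is a unit is an
isomorphism from the Boolean ring of idempotents of `R` onto the Boolean ring of clopen
subsets of `X`. -/
theorem idempotents_equiv_clopens_of_locallyRingedSpace (X : LocallyRingedSpace) :
    let R := X.presheaf.obj (op ⊤)
    let Xs : R → Set ↑X.toRingedSpace.toPresheafedSpace := fun s => (X.toRingedSpace.basicOpen s : Set _)
    (∀ s : R, IsIdempotentElem s → IsClopen (Xs s)) ∧
    (∀ s t : R, IsIdempotentElem s → IsIdempotentElem t → Xs s = Xs t → s = t) ∧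
    (∀ V : Set ↑X.toRingedSpace.toPresheafedSpace, IsClopen V → ∃ s : R, IsIdempotentElem s ∧ Xs s = V) ∧
    (∀ s t : R, IsIdempotentElem s → IsIdempotentElem t →
      Xs (s + t - 2 * s * t) = (Xs s ∪ Xs t) \ (Xs s ∩ Xs t)) ∧
    (∀ s t : R, IsIdempotentElem s → IsIdempotentElem t → Xs (s * t) = Xs s ∩ Xs t) ∧
    Xs (0 : R) = ∅ ∧ Xs (1 : R) = Set.univ := by
  intro R Xs
  exact ⟨fun s hs ↦ X.isClopen_basicOpen_of_isIdempotentElem hs,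
    fun s t hs ht h ↦ X.basicOpen_injOn_isIdempotentElem hs ht (SetLike.coe_injective h),
    fun V hV ↦ X.exists_isIdempotentElem_basicOpen_eq_of_isClopen hV,
    fun s t hs ht ↦ X.basicOpen_add_sub_two_mul_of_isIdempotentElem hs ht,
    fun s t _ _ ↦ congrArg SetLike.coe (X.toRingedSpace.basicOpen_mul s t),
    congrArg SetLike.coe (X.basicOpen_zero ⊤),
    congrArg SetLike.coe (X.toRingedSpace.basicOpen_of_isUnit isUnit_one)⟩
end

section
/- Let I be a proper regular ideal of a commutative ring R (i.e., a proper ideal generated by a set of idempotents). Then I is a max-regular ideal (maximal among proper regular ideals) if and only if the quotient ring R/I has no idempotents other than 0 and 1. -/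
/-!
Modulo a regular ideal `I`, idempotents lift: if `a² - a ∈ I`, then `a² - a` lies in the ideal
generated by finitely many of the idempotent generators of `I`, and that ideal is generated by a
single idempotent `f ∈ I` (a finitely generated idempotent ideal is principal with an idempotent
generator). Hence `(a² - a) f = a² - a`, and `a (1 - f)` is an idempotent lift of `a`.

For an idempotent `e`, the ideal `I + (e)` is again regular, and it is the unit ideal exactly when
`e ≡ 1 mod I`. So an idempotent `e` with `e ≢ 1` either lies in `I` or enlarges `I` to a proper
regular ideal, and conversely every proper regular ideal above `I` is generated by idempotents
that are `≡ 0 mod I` once `R/I` has only trivial idempotents.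
-/

/-- An ideal is regular if it is generated by a set of idempotent elements. -/
def IsRegularIdeal {R : Type*} [CommRing R] (I : Ideal R) : Prop :=
  ∃ S : Set R, (∀ e ∈ S, IsIdempotentElem e) ∧ I = Ideal.span S

/-- A max-regular ideal is a maximal element of the set of proper regular ideals. -/
def IsMaxRegularIdeal {R : Type*} [CommRing R] (I : Ideal R) : Prop :=
  I ≠ ⊤ ∧ IsRegularIdeal I ∧
    ∀ J : Ideal R, IsRegularIdeal J → J ≠ ⊤ → I ≤ J → I = J

open Ideal

theorem Ideal.isIdempotentElem_span {R : Type*} [CommRing R] {s : Set R}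
    (hs : ∀ e ∈ s, IsIdempotentElem e) : IsIdempotentElem (span s) := by
  refine le_antisymm mul_le_right (span_le.mpr fun e he => ?_)
  rw [SetLike.mem_coe, ← (hs e he).eq]
  exact mul_mem_mul (subset_span he) (subset_span he)

theorem Ideal.sup_span_singleton_eq_top_iff_mk_eq_one {R : Type*} [CommRing R] (I : Ideal R)
    {e : R} (he : IsIdempotentElem e) : I ⊔ span {e} = ⊤ ↔ Ideal.Quotient.mk I e = 1 := by
  rw [← map_one (Ideal.Quotient.mk I), Quotient.eq, eq_top_iff_one]
  constructor
  · intro h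
    obtain ⟨i, hi, z, hz, hiz⟩ := Submodule.mem_sup.mp h
    obtain ⟨s, rfl⟩ := mem_span_singleton'.mp hz
    -- Multiplying `i + s e = 1` by `e - 1` kills the `s e` term.
    have : e - 1 = (e - 1) * i := by linear_combination (1 - e) * hiz + s * he.eq
    exact this ▸ I.mul_mem_left _ hi
  · intro h
    simpa using add_mem (mem_sup_left (I.neg_mem h)) (mem_sup_right (mem_span_singleton_self e))

section Regular

variable {R : Type*} [CommRing R] {I : Ideal R}

theorem IsRegularIdeal.exists_isIdempotentElem_mul_eq_self (hI : IsRegularIdeal I) {c : R}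
    (hc : c ∈ I) : ∃ f ∈ I, IsIdempotentElem f ∧ c * f = c := by
  obtain ⟨S, hS, rfl⟩ := hI
  obtain ⟨t, htS, hct⟩ := Submodule.mem_span_finite_of_mem_span hc
  obtain ⟨f, hf, hspan⟩ := ((span (t : Set R)).isIdempotentElem_iff_of_fg ⟨t, rfl⟩).mp
    (isIdempotentElem_span fun e he => hS e (htS he))
  have hft : f ∈ span (t : Set R) := hspan ▸ Submodule.mem_span_singleton_self f
  refine ⟨f, span_mono htS hft, hf, ?_⟩
  rw [submodule_span_eq, hspan] at hct
  obtain ⟨r, rfl⟩ := Submodule.mem_span_singleton.mp hct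
  rw [smul_eq_mul, mul_assoc, hf.eq]

theorem IsRegularIdeal.exists_isIdempotentElem_mk_eq (hI : IsRegularIdeal I) {x : R ⧸ I}
    (hx : IsIdempotentElem x) : ∃ e : R, IsIdempotentElem e ∧ Ideal.Quotient.mk I e = x := by
  obtain ⟨a, rfl⟩ := Ideal.Quotient.mk_surjective x
  have ha : a * a - a ∈ I := by
    rw [← Quotient.eq_zero_iff_mem, map_sub, map_mul, sub_eq_zero]
    exact hx
  obtain ⟨f, hfI, hf, hcf⟩ := hI.exists_isIdempotentElem_mul_eq_self ha
  refine ⟨a - a * f, ?_, ?_⟩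
  · change (a - a * f) * (a - a * f) = a - a * f
    linear_combination a * a * hf.eq - hcf
  · rw [map_sub, map_mul, Quotient.eq_zero_iff_mem.mpr hfI, mul_zero, sub_zero]

theorem IsRegularIdeal.sup_span_singleton (hI : IsRegularIdeal I) {e : R}
    (he : IsIdempotentElem e) : IsRegularIdeal (I ⊔ span {e}) := by
  obtain ⟨S, hS, rfl⟩ := hI
  refine ⟨S ∪ {e}, ?_, (span_union S {e}).symm⟩
  rintro x (hx | rfl)
  exacts [hS x hx, he]

end Regular

/-- A proper regular ideal `I` of a commutative ring `R` is max-regular if and only if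
`R/I` has no idempotents other than `0` and `1`. -/
theorem isMaxRegularIdeal_iff_quotient_no_nontrivial_idempotents
    {R : Type*} [CommRing R] (I : Ideal R) (hreg : IsRegularIdeal I) (hproper : I ≠ ⊤) :
    IsMaxRegularIdeal I ↔ ∀ x : R ⧸ I, IsIdempotentElem x → x = 0 ∨ x = 1 := by
  refine ⟨fun hmax x hx => ?_, fun h => ⟨hproper, hreg, ?_⟩⟩
  · obtain ⟨e, he, rfl⟩ := hreg.exists_isIdempotentElem_mk_eq hx
    by_cases htop : I ⊔ span {e} = ⊤
    · exact Or.inr ((sup_span_singleton_eq_top_iff_mk_eq_one I he).mp htop)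
    · left
      rw [Quotient.eq_zero_iff_mem, hmax.2.2 _ (hreg.sup_span_singleton he) htop le_sup_left]
      exact mem_sup_right (mem_span_singleton_self e)
  · rintro J ⟨T, hT, rfl⟩ hJ hIJ
    refine le_antisymm hIJ (span_le.mpr fun e he => ?_)
    rcases h _ ((hT e he).map (Ideal.Quotient.mk I)) with h0 | h1
    · exact Quotient.eq_zero_iff_mem.mp h0
    · refine absurd (top_le_iff.mp ?_) hJ
      rw [← (sup_span_singleton_eq_top_iff_mk_eq_one I (hT e he)).mpr h1]
      exact sup_le hIJ (span_singleton_le_iff_mem _ |>.mpr (subset_span he))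
end

section
/- For any commutative ring R and any prime ideal P of R, the ideal P* generated by all idempotent elements contained in P is a max-regular ideal of R. -/
/-!
An idempotent `e` satisfies `e * (1 - e) = 0`, so a prime `P` contains `e` or `1 - e`.
A regular ideal `J` is spanned by its own idempotents. If `J` is proper and contains `P*`,
each idempotent `e ∈ J` lies in `P`: otherwise the idempotent `1 - e` lies in `P`, hence in
`P* ⊆ J`, and `1 = e + (1 - e) ∈ J`. Thus `J ⊆ P*`.
-/

namespace Ideal

variable {R : Type*} [CommRing R]

lemma IsPrime.mem_or_one_sub_mem_of_isIdempotentElem {P : Ideal R} (hP : P.IsPrime) {e : R}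
    (he : IsIdempotentElem e) : e ∈ P ∨ 1 - e ∈ P :=
  hP.mem_or_mem (he.mul_one_sub_self ▸ P.zero_mem)

lemma eq_top_of_mem_of_one_sub_mem {I : Ideal R} {x : R} (hx : x ∈ I) (h1x : 1 - x ∈ I) :
    I = ⊤ :=
  (eq_top_iff_one I).2 (by simpa using I.add_mem hx h1x)

lemma span_idempotents_le (I : Ideal R) : span {e | e ∈ I ∧ IsIdempotentElem e} ≤ I :=
  span_le.2 fun _ he => he.1

lemma isRegularIdeal_span_idempotents (I : Ideal R) :
    IsRegularIdeal (span {e | e ∈ I ∧ IsIdempotentElem e}) :=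
  ⟨_, fun _ he => he.2, rfl⟩

lemma IsPrime.mem_of_isIdempotentElem_of_span_idempotents_le {P J : Ideal R} (hP : P.IsPrime)
    (hJ : J ≠ ⊤) (hle : span {e | e ∈ P ∧ IsIdempotentElem e} ≤ J) {e : R}
    (he : IsIdempotentElem e) (heJ : e ∈ J) : e ∈ P :=
  (hP.mem_or_one_sub_mem_of_isIdempotentElem he).resolve_right fun h1e =>
    hJ (eq_top_of_mem_of_one_sub_mem heJ (hle (subset_span ⟨h1e, he.one_sub⟩)))

end Ideal

open Ideal in
lemma IsRegularIdeal.eq_span_idempotents {R : Type*} [CommRing R] {J : Ideal R}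
    (hJ : IsRegularIdeal J) : J = span {e | e ∈ J ∧ IsIdempotentElem e} := by
  obtain ⟨S, hS, rfl⟩ := hJ
  exact le_antisymm (span_le.2 fun e he => subset_span ⟨subset_span he, hS e he⟩)
    (span_idempotents_le _)

/-- For a prime ideal `P` of a commutative ring `R`, the ideal `P*` generated by all
idempotent elements of `P` is a max-regular ideal of `R`. -/
theorem isMaxRegularIdeal_span_idempotents_of_prime
    {R : Type*} [CommRing R] (P : Ideal R) (hP : P.IsPrime) :
    IsMaxRegularIdeal (Ideal.span {e : R | e ∈ P ∧ IsIdempotentElem e}) := by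
  refine ⟨fun h => hP.ne_top (top_le_iff.1 (h ▸ P.span_idempotents_le)),
    P.isRegularIdeal_span_idempotents, fun J hJreg hJ hle => le_antisymm hle ?_⟩
  calc J = Ideal.span {e | e ∈ J ∧ IsIdempotentElem e} := hJreg.eq_span_idempotents
    _ ≤ Ideal.span {e | e ∈ P ∧ IsIdempotentElem e} := Ideal.span_mono fun e ⟨heJ, he⟩ =>
        ⟨hP.mem_of_isIdempotentElem_of_span_idempotents_le hJ hle he heJ, he⟩
end

section
/- For any commutative ring R, every quasi-component of Spec(R) is connected; equivalently, for every prime P, the closed set V(P*) (where P* is the ideal generated by the idempotents lying in P) is precisely the connected component of P in Spec(R). -/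
/-!
Write `P*` for the ideal generated by the idempotents of `P`. Clopen subsets of `Spec R` are
exactly the sets `V(e)` with `e` idempotent, so the quasi-component of `P` is
`⋂_{e ∈ P idempotent} V(e) = V(P*) ≅ Spec (R ⧸ P*)`. This is connected because `R ⧸ P*` has no
nontrivial idempotents: if `x² - x ∈ P*`, then `x² - x = (x² - x) e` for an idempotent `e ∈ P*`
(finitely many idempotents generate an idempotent ideal, hence a principal one), so
`z = x (1 - e)` is an idempotent of `R`; as `P` is prime it contains `z` or `1 - z`, whence
`x ≡ 0` or `x ≡ 1` modulo `P*`. A connected quasi-component is the connected component.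
-/

open PrimeSpectrum Set

namespace Ideal

variable {R : Type*} [CommRing R]

def idempotentSpan (I : Ideal R) : Ideal R :=
  span {e | e ∈ I ∧ IsIdempotentElem e}

theorem isIdempotentElem_span_s10 {s : Set R} (hs : ∀ e ∈ s, IsIdempotentElem e) :
    IsIdempotentElem (span s) :=
  le_antisymm mul_le_left <| span_le.mpr fun e he ↦ (hs e he).eq ▸
    mul_mem_mul (subset_span he) (subset_span he)

theorem exists_isIdempotentElem_mul_eq_of_mem_span {s : Set R}
    (hs : ∀ e ∈ s, IsIdempotentElem e) {x : R} (hx : x ∈ span s) :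
    ∃ e ∈ span s, IsIdempotentElem e ∧ x * e = x := by
  obtain ⟨T, hTs, hxT⟩ := Submodule.mem_span_finite_of_mem_span hx
  obtain ⟨e, he, hTe⟩ := ((span (T : Set R)).isIdempotentElem_iff_of_fg
    ⟨T, rfl⟩).mp (isIdempotentElem_span_s10 fun t ht ↦ hs t (hTs ht))
  have heT : e ∈ span (T : Set R) := hTe.ge (Submodule.mem_span_singleton_self e)
  obtain ⟨r, rfl⟩ := mem_span_singleton'.mp (hTe.le hxT)
  exact ⟨e, span_mono hTs heT, he, by rw [mul_assoc, he.eq]⟩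

theorem IsPrime.eq_zero_or_one_of_isIdempotentElem_quotient_idempotentSpan {p : Ideal R}
    (hp : p.IsPrime) (a : R ⧸ p.idempotentSpan) (ha : IsIdempotentElem a) : a = 0 ∨ a = 1 := by
  obtain ⟨x, rfl⟩ := Quotient.mk_surjective a
  have hsq : x * x - x ∈ p.idempotentSpan := by
    rw [← Quotient.eq_zero_iff_mem, map_sub, map_mul, ha.eq, sub_self]
  obtain ⟨e, heJ, he, hxe⟩ :=
    exists_isIdempotentElem_mul_eq_of_mem_span (fun _ h ↦ h.2) hsq
  have hz : IsIdempotentElem (x * (1 - e)) := by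
    unfold IsIdempotentElem
    linear_combination x ^ 2 * he.eq - hxe
  have hxe_mem : x * e ∈ p.idempotentSpan := mul_mem_left _ x heJ
  have hz_or : x * (1 - e) ∈ p ∨ 1 - x * (1 - e) ∈ p :=
    hp.mem_or_mem (by rw [hz.mul_one_sub_self]; exact p.zero_mem)
  rcases hz_or with hzp | hzp
  · left
    rw [Quotient.eq_zero_iff_mem, show x = x * (1 - e) + x * e by ring]
    exact add_mem (subset_span ⟨hzp, hz⟩) hxe_mem
  · right
    rw [← map_one (Quotient.mk _), Quotient.mk_eq_mk_iff_sub_mem,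
      show x - 1 = x * e - (1 - x * (1 - e)) by ring]
    exact sub_mem hxe_mem (subset_span ⟨hzp, hz.one_sub⟩)

end Ideal

namespace PrimeSpectrum

variable {R : Type*} [CommRing R]

theorem preconnectedSpace_of_isIdempotentElem
    (h : ∀ e : R, IsIdempotentElem e → e = 0 ∨ e = 1) : PreconnectedSpace (PrimeSpectrum R) := by
  refine preconnectedSpace_iff_clopen.mpr fun s hs ↦ ?_
  obtain ⟨e, he, rfl⟩ := isClopen_iff_zeroLocus.mp hs
  rcases h e he with rfl | rfl
  · exact .inr (by simp)
  · exact .inl zeroLocus_singleton_one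

theorem isPreconnected_zeroLocus_idempotentSpan (P : PrimeSpectrum R) :
    IsPreconnected (zeroLocus (P.asIdeal.idempotentSpan : Set R)) := by
  have := preconnectedSpace_of_isIdempotentElem
    P.2.eq_zero_or_one_of_isIdempotentElem_quotient_idempotentSpan
  rw [← Ideal.mk_ker (I := P.asIdeal.idempotentSpan),
    ← range_comap_of_surjective _ _ Ideal.Quotient.mk_surjective]
  exact isPreconnected_range (continuous_comap _)

theorem zeroLocus_idempotentSpan_eq_sInter_isClopen (P : PrimeSpectrum R) :
    zeroLocus (P.asIdeal.idempotentSpan : Set R) = ⋂₀ {A | IsClopen A ∧ P ∈ A} := by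
  refine subset_antisymm ?_ ?_
  · rintro q hq A ⟨hA, hPA⟩
    obtain ⟨e, he, rfl⟩ := isClopen_iff_zeroLocus.mp hA
    have heP : e ∈ P.asIdeal := (mem_zeroLocus _ _).mp hPA rfl
    exact (mem_zeroLocus _ _).mpr
      (singleton_subset_iff.mpr <| hq (Ideal.subset_span ⟨heP, he⟩))
  · intro q hq
    rw [Ideal.idempotentSpan, zeroLocus_span]
    rintro e ⟨heP, he⟩
    have hclopen : IsClopen (zeroLocus {e}) := isClopen_iff_zeroLocus.mpr ⟨e, he, rfl⟩
    exact hq _ ⟨hclopen, singleton_subset_iff.mpr heP⟩ rfl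

end PrimeSpectrum

theorem sInter_isClopen_eq_connectedComponent {X : Type*} [TopologicalSpace X] {x : X}
    (h : IsPreconnected (⋂₀ {A : Set X | IsClopen A ∧ x ∈ A})) :
    ⋂₀ {A : Set X | IsClopen A ∧ x ∈ A} = connectedComponent x :=
  subset_antisymm (h.subset_connectedComponent fun _ hA ↦ hA.2)
    fun _ hy _ hA ↦ hA.1.connectedComponent_subset hA.2 hy

/-- For any commutative ring `R`, every quasi-component of `Spec R` is connected;
equivalently, for every prime `P`, the zero locus of the ideal `P*` generated by the
idempotents lying in `P` is exactly the connected component of `P` in `Spec R`. -/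
theorem primeSpectrum_quasiComponent_connected (R : Type*) [CommRing R]
    (P : PrimeSpectrum R) :
    IsConnected (⋂₀ {A : Set (PrimeSpectrum R) | IsClopen A ∧ P ∈ A}) ∧
    PrimeSpectrum.zeroLocus
        (Ideal.span {e : R | e ∈ P.asIdeal ∧ IsIdempotentElem e} : Ideal R) =
      connectedComponent P := by
  change _ ∧ zeroLocus (P.asIdeal.idempotentSpan : Set R) = _
  have hquasi := zeroLocus_idempotentSpan_eq_sInter_isClopen P
  have hpre : IsPreconnected (⋂₀ {A : Set (PrimeSpectrum R) | IsClopen A ∧ P ∈ A}) :=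
    hquasi ▸ isPreconnected_zeroLocus_idempotentSpan P
  refine ⟨⟨⟨P, fun _ hA ↦ hA.2⟩, hpre⟩, ?_⟩
  rw [hquasi, sInter_isClopen_eq_connectedComponent hpre]
end

section
/- If I is a max-regular ideal of a commutative ring R, then the minimal primes over I are exactly the minimal primes of R that contain I, i.e., Min(I) = Min(R) ∩ V(I). -/
/-! Since `e * (1 - e) = 0`, a prime contains `e` or `1 - e`; a proper ideal cannot contain both,
so an idempotent lying in a proper ideal lies in every prime below it. Hence the closed set
`V(I)` of an ideal generated by idempotents is stable under generalization, and then the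
minimal primes over `I` are minimal primes of `R`. -/

section

variable {R : Type*} [CommRing R]

lemma IsIdempotentElem.mem_of_mem_of_le {e : R} (he : IsIdempotentElem e) {p q : Ideal R}
    (hp : p ≠ ⊤) (hq : q.IsPrime) (hqp : q ≤ p) (hep : e ∈ p) : e ∈ q := by
  have hzero : e * (1 - e) ∈ q := he.mul_one_sub_self ▸ q.zero_mem
  refine (hq.mem_or_mem hzero).resolve_right fun hcompl => hp ?_
  rw [Ideal.eq_top_iff_one, ← add_sub_cancel e 1]
  exact p.add_mem hep (hqp hcompl)

lemma IsRegularIdeal.le_of_le {I p q : Ideal R} (hI : IsRegularIdeal I) (hp : p ≠ ⊤)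
    (hq : q.IsPrime) (hqp : q ≤ p) (hIp : I ≤ p) : I ≤ q := by
  obtain ⟨S, hS, rfl⟩ := hI
  rw [Ideal.span_le] at hIp ⊢
  exact fun e he => (hS e he).mem_of_mem_of_le hp hq hqp (hIp he)

lemma Ideal.minimalPrimes_eq_inter_of_stableUnderGeneralization {I : Ideal R}
    (hI : ∀ p q : Ideal R, p.IsPrime → q.IsPrime → q ≤ p → I ≤ p → I ≤ q) :
    I.minimalPrimes = minimalPrimes R ∩ {p : Ideal R | I ≤ p} := by
  ext p
  constructor
  · rintro ⟨⟨hp, hIp⟩, hmin⟩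
    exact ⟨⟨⟨hp, bot_le⟩, fun q ⟨hq, _⟩ hqp => hmin ⟨hq, hI p q hp hq hqp hIp⟩ hqp⟩, hIp⟩
  · rintro ⟨⟨⟨hp, -⟩, hmin⟩, hIp⟩
    exact ⟨⟨hp, hIp⟩, fun q ⟨hq, _⟩ hqp => hmin ⟨hq, bot_le⟩ hqp⟩

end

/-- If `I` is a max-regular ideal of a commutative ring `R`, then the minimal primes over
`I` are exactly the minimal primes of `R` containing `I`: `Min(I) = Min(R) ∩ V(I)`. -/
theorem minimalPrimes_of_maxRegular {R : Type*} [CommRing R] (I : Ideal R)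
    (hI : IsMaxRegularIdeal I) :
    I.minimalPrimes = minimalPrimes R ∩ {p : Ideal R | I ≤ p} :=
  Ideal.minimalPrimes_eq_inter_of_stableUnderGeneralization fun _ _ hp hq hqp hIp =>
    hI.2.1.le_of_le hp.ne_top hq hqp hIp
end

section
/- Let e be an idempotent element of a commutative ring R. The following are equivalent: (i) e is a primitive idempotent (e ≠ 0 and any nonzero idempotent e' with ee' = e' equals e); (ii) the ideal R(1−e) is a max-regular ideal of R; (iii) D(e) is a connected component of Spec(R); (iv) D(e) is a connected subset of Spec(R). -/
/-- A primitive idempotent is a nonzero idempotent `e` such that every nonzero idempotent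
`e'` with `e * e' = e'` equals `e`. -/
def IsPrimitiveIdempotent {R : Type*} [CommRing R] (e : R) : Prop :=
  IsIdempotentElem e ∧ e ≠ 0 ∧
    ∀ e' : R, IsIdempotentElem e' → e' ≠ 0 → e * e' = e' → e = e'

open TopologicalSpace

section Topology

variable {X : Type*} [TopologicalSpace X]

theorem TopologicalSpace.Clopens.isAtom_iff_isConnected {s : Clopens X} :
    IsAtom s ↔ IsConnected (s : Set X) := by
  rw [isAtom_iff_le_of_ge]
  constructor
  · rintro ⟨hne, hmin⟩
    refine ⟨Set.nonempty_iff_ne_empty.2 fun h => hne (Clopens.ext h),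
      isPreconnected_iff_subset_of_disjoint.2 fun u v hu hv hcov hdisj => ?_⟩
    have hsu : (s : Set X) ∩ u = (s : Set X) \ v := by
      ext x
      constructor
      · exact fun ⟨hxs, hxu⟩ => ⟨hxs, fun hxv => (hdisj ▸ ⟨hxs, hxu, hxv⟩ : x ∈ (∅ : Set X))⟩
      · exact fun ⟨hxs, hxv⟩ => ⟨hxs, (hcov hxs).resolve_right hxv⟩
    let t : Clopens X := ⟨(s : Set X) ∩ u, hsu ▸ s.isClopen.isClosed.sdiff hv,
      s.isClopen.isOpen.inter hu⟩
    by_cases ht : t = ⊥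
    · right
      intro x hxs
      refine (hcov hxs).resolve_left fun hxu => ?_
      exact (congrArg (x ∈ ·) (congrArg SetLike.coe ht)).mp ⟨hxs, hxu⟩
    · left
      exact fun x hx => (hmin t ht Set.inter_subset_left hx).2
  · rintro ⟨hne, hpre⟩
    refine ⟨fun h => hne.ne_empty (congrArg SetLike.coe h), fun t ht hts => ?_⟩
    obtain ⟨x, hx⟩ := Set.nonempty_iff_ne_empty.2 fun h => ht (Clopens.ext h)
    exact hpre.subset_isClopen t.isClopen ⟨x, hts hx, hx⟩

theorem IsClopen.isConnected_iff_exists_eq_connectedComponent {s : Set X} (hs : IsClopen s) :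
    IsConnected s ↔ ∃ x, s = connectedComponent x := by
  constructor
  · intro h
    obtain ⟨x, hx⟩ := h.nonempty
    exact ⟨x, (h.isPreconnected.subset_connectedComponent hx).antisymm
      (hs.connectedComponent_subset hx)⟩
  · rintro ⟨x, rfl⟩
    exact isConnected_connectedComponent

end Topology

section Idempotents

variable {R : Type*} [CommRing R] {e f : R}

theorem IsIdempotentElem.mem_span_one_sub_iff (he : IsIdempotentElem e) :
    f ∈ Ideal.span {1 - e} ↔ e * f = 0 := by
  rw [Ideal.mem_span_singleton']
  constructor
  · rintro ⟨r, rfl⟩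
    linear_combination (-r) * he.eq
  · exact fun h => ⟨f, by linear_combination -h⟩

theorem IsIdempotentElem.span_one_sub_eq_top_iff (he : IsIdempotentElem e) :
    Ideal.span {1 - e} = ⊤ ↔ e = 0 := by
  rw [Ideal.eq_top_iff_one, he.mem_span_one_sub_iff, mul_one]

theorem IsIdempotentElem.span_one_sub_le_span_one_sub_iff (hf : IsIdempotentElem f) :
    Ideal.span {1 - e} ≤ Ideal.span {1 - f} ↔ f * e = f := by
  rw [Ideal.span_singleton_le_iff_mem, hf.mem_span_one_sub_iff, mul_one_sub, sub_eq_zero,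
    eq_comm]

theorem IsIdempotentElem.isRegularIdeal_span_one_sub (he : IsIdempotentElem e) :
    IsRegularIdeal (Ideal.span {1 - e}) :=
  ⟨{1 - e}, by simpa using he.one_sub, rfl⟩

theorem isPrimitiveIdempotent_iff_isAtom (he : IsIdempotentElem e) :
    IsPrimitiveIdempotent e ↔ IsAtom (⟨e, he⟩ : {e : R // IsIdempotentElem e}) := by
  have hbot : ∀ {f : R} (hf : IsIdempotentElem f),
      (⟨f, hf⟩ : {e : R // IsIdempotentElem e}) ≠ ⊥ ↔ f ≠ 0 := fun _ => Subtype.ext_iff.not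
  rw [isAtom_iff_le_of_ge, hbot, Subtype.forall, IsPrimitiveIdempotent, and_iff_right he]
  refine and_congr_right fun _ => forall₂_congr fun f hf => ?_
  rw [hbot]
  change (f ≠ 0 → e * f = f → e = f) ↔ (f ≠ 0 → f * e = f → e * f = e)
  rw [mul_comm f e]
  exact imp_congr_right fun _ => imp_congr_right fun hef => by rw [hef, eq_comm]

theorem IsPrimitiveIdempotent.mul_eq_zero_or_eq (hp : IsPrimitiveIdempotent e)
    (hf : IsIdempotentElem f) : e * f = 0 ∨ e * f = e := by
  by_cases h0 : e * f = 0
  · exact .inl h0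
  · exact .inr (hp.2.2 _ (hp.1.mul hf) h0 (by rw [← mul_assoc, hp.1.eq])).symm

theorem IsPrimitiveIdempotent.isMaxRegularIdeal (hp : IsPrimitiveIdempotent e) :
    IsMaxRegularIdeal (Ideal.span {1 - e}) := by
  refine ⟨hp.1.span_one_sub_eq_top_iff.not.2 hp.2.1, hp.1.isRegularIdeal_span_one_sub, ?_⟩
  rintro J ⟨S, hS, rfl⟩ hJ hle
  refine hle.antisymm (Ideal.span_le.2 fun f hf => ?_)
  rcases hp.mul_eq_zero_or_eq (hS f hf) with h | h
  · exact hp.1.mem_span_one_sub_iff.2 h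
  · refine absurd ((Ideal.eq_top_iff_one _).2 ?_) hJ
    rw [show (1 : R) = (1 - e) + e * f by rw [h]; ring]
    exact add_mem (hle (Ideal.mem_span_singleton_self _))
      (Ideal.mul_mem_left _ _ (Ideal.subset_span hf))

theorem isMaxRegularIdeal_span_one_sub_iff (he : IsIdempotentElem e) :
    IsMaxRegularIdeal (Ideal.span {1 - e}) ↔ IsPrimitiveIdempotent e := by
  refine ⟨fun ⟨htop, _, hmax⟩ => ?_, IsPrimitiveIdempotent.isMaxRegularIdeal⟩
  refine ⟨he, fun h0 => htop (he.span_one_sub_eq_top_iff.2 h0), fun e' he' hne' hee' => ?_⟩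
  have heq := hmax _ he'.isRegularIdeal_span_one_sub (he'.span_one_sub_eq_top_iff.not.2 hne')
    (he'.span_one_sub_le_span_one_sub_iff.2 (by rwa [mul_comm]))
  exact (he.span_one_sub_le_span_one_sub_iff.1 heq.ge).symm.trans hee'

end Idempotents

/-- For an idempotent `e` of a commutative ring `R`, the following are equivalent:
(i) `e` is a primitive idempotent; (ii) `R(1-e)` is a max-regular ideal;
(iii) `D(e)` is a connected component of `Spec R`; (iv) `D(e)` is connected. -/
theorem primitive_idempotent_tfae {R : Type*} [CommRing R] (e : R)
    (he : IsIdempotentElem e) :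
    (IsPrimitiveIdempotent e ↔ IsMaxRegularIdeal (Ideal.span {1 - e})) ∧
    (IsPrimitiveIdempotent e ↔
      ∃ p : PrimeSpectrum R, {q : PrimeSpectrum R | e ∉ q.asIdeal} = connectedComponent p) ∧
    (IsPrimitiveIdempotent e ↔ IsConnected {q : PrimeSpectrum R | e ∉ q.asIdeal}) := by
  have hconn : IsPrimitiveIdempotent e ↔ IsConnected {q : PrimeSpectrum R | e ∉ q.asIdeal} := by
    rw [isPrimitiveIdempotent_iff_isAtom he,
      ← PrimeSpectrum.isIdempotentElemEquivClopens.isAtom_iff, Clopens.isAtom_iff_isConnected]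
    rfl
  have hclopen : IsClopen {q : PrimeSpectrum R | e ∉ q.asIdeal} :=
    PrimeSpectrum.isClopen_iff.2 ⟨e, he, rfl⟩
  exact ⟨(isMaxRegularIdeal_span_one_sub_iff he).symm,
    hconn.trans hclopen.isConnected_iff_exists_eq_connectedComponent, hconn⟩
end

section
/- Let R be a nonzero commutative ring. Then R has finitely many idempotents if and only if there exist finitely many distinct primitive idempotents e₁, …, eₙ of R (n ≥ 1) with e₁ + ⋯ + eₙ = 1, and in that case the canonical map R → ∏_{k=1}^{n} R/(1 − e_k) is a ring isomorphism, where each quotient R/(1 − e_k) is a nonzero ring with no nontrivial idempotents. -/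
section

variable {R : Type*} [CommRing R]

theorem isAtom_iff_isPrimitiveIdempotent {e : {a : R // IsIdempotentElem a}} :
    IsAtom e ↔ IsPrimitiveIdempotent (e : R) := by
  have le_iff_mul_eq (f g : {a : R // IsIdempotentElem a}) : f ≤ g ↔ (g : R) * f = f := by
    rw [mul_comm]; rfl
  have ne_bot_iff_ne_zero (f : {a : R // IsIdempotentElem a}) : f ≠ ⊥ ↔ (f : R) ≠ 0 :=
    Subtype.ext_iff.not
  rw [isAtom_iff_le_of_ge, ne_bot_iff_ne_zero]
  refine ⟨fun ⟨hne, hle⟩ => ⟨e.2, hne, fun f hf hf0 hef => ?_⟩,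
    fun ⟨_, hne, hle⟩ => ⟨hne, fun f hf0 hfe => ?_⟩⟩
  · have hfe : (⟨f, hf⟩ : {a : R // IsIdempotentElem a}) ≤ e := (le_iff_mul_eq _ _).2 hef
    exact congrArg Subtype.val (le_antisymm (hle _ ((ne_bot_iff_ne_zero _).2 hf0) hfe) hfe)
  · exact (Subtype.ext (hle f f.2 ((ne_bot_iff_ne_zero f).1 hf0) ((le_iff_mul_eq f e).1 hfe))).le

theorem IsPrimitiveIdempotent.mul_eq_zero_of_ne {e f : R} (he : IsPrimitiveIdempotent e)
    (hf : IsPrimitiveIdempotent f) (hne : e ≠ f) : e * f = 0 := by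
  have hdisj : Disjoint (⟨e, he.1⟩ : {a : R // IsIdempotentElem a}) ⟨f, hf.1⟩ :=
    (isAtom_iff_isPrimitiveIdempotent.2 he).disjoint_of_ne (isAtom_iff_isPrimitiveIdempotent.2 hf)
      fun h => hne (congrArg Subtype.val h)
  exact congrArg Subtype.val hdisj.eq_bot

theorem orthogonalIdempotents_of_isPrimitiveIdempotent {ι : Type*} {e : ι → R}
    (hprim : ∀ i, IsPrimitiveIdempotent (e i)) (hinj : Function.Injective e) :
    OrthogonalIdempotents e :=
  ⟨fun i => (hprim i).1, fun _ _ hij => (hprim _).mul_eq_zero_of_ne (hprim _) (hinj.ne hij)⟩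

theorem completeOrthogonalIdempotents_of_isPrimitiveIdempotent {ι : Type*} [Fintype ι]
    {e : ι → R} (hprim : ∀ i, IsPrimitiveIdempotent (e i)) (hinj : Function.Injective e)
    (hsum : ∑ i, e i = 1) : CompleteOrthogonalIdempotents e :=
  ⟨orthogonalIdempotents_of_isPrimitiveIdempotent hprim hinj, hsum⟩

theorem OrthogonalIdempotents.sum_eq_one_of_forall_exists_mul_eq {ι : Type*} [Fintype ι]
    {e : ι → R} (he : OrthogonalIdempotents e) (he0 : ∀ i, e i ≠ 0)
    (hcover : ∀ f, IsIdempotentElem f → f ≠ 0 → ∃ i, e i * f = e i) : ∑ i, e i = 1 := by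
  by_contra hne
  obtain ⟨i, hi⟩ := hcover _ he.isIdempotentElem_sum.one_sub (sub_ne_zero.2 (Ne.symm hne))
  have hsum : e i * ∑ j, e j = e i := he.mul_sum_of_mem (Finset.mem_univ i)
  exact he0 i (by rw [← hi, mul_sub, mul_one, hsum, sub_self])

theorem exists_fin_isPrimitiveIdempotent_sum_eq_one [Finite {e : R // IsIdempotentElem e}] :
    ∃ (n : ℕ) (e : Fin n → R), (∀ k, IsPrimitiveIdempotent (e k)) ∧
      Function.Injective e ∧ ∑ k, e k = 1 := by
  let A := {a : {e : R // IsIdempotentElem e} // IsAtom a}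
  have : Fintype A := Fintype.ofFinite A
  let atom : A → R := fun a => a.1
  have hprim (a : A) : IsPrimitiveIdempotent (atom a) := isAtom_iff_isPrimitiveIdempotent.1 a.2
  have hinj : Function.Injective atom := Subtype.val_injective.comp Subtype.val_injective
  have hsum : ∑ a, atom a = 1 := by
    refine (orthogonalIdempotents_of_isPrimitiveIdempotent hprim hinj)
      |>.sum_eq_one_of_forall_exists_mul_eq (fun a => (hprim a).2.1) fun f hf hf0 => ?_
    obtain ⟨a, ha, haf⟩ :=
      (eq_bot_or_exists_atom_le (⟨f, hf⟩ : {e : R // IsIdempotentElem e})).resolve_left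
        fun h => hf0 (congrArg Subtype.val h)
    exact ⟨⟨a, ha⟩, haf⟩
  let σ := (Fintype.equivFin A).symm
  exact ⟨Fintype.card A, atom ∘ σ, fun k => hprim (σ k), hinj.comp σ.injective,
    (Equiv.sum_comp σ atom).trans hsum⟩

theorem Ideal.Quotient.mk_span_one_sub (e : R) :
    Ideal.Quotient.mk (Ideal.span {1 - e}) e = 1 := by
  rw [← map_one (Ideal.Quotient.mk _), Ideal.Quotient.mk_eq_mk_iff_sub_mem,
    Ideal.mem_span_singleton]
  exact ⟨-1, by ring⟩

namespace IsIdempotentElem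

variable {e : R}

theorem nontrivial_quotient_span_one_sub (he : IsIdempotentElem e) (he0 : e ≠ 0) :
    Nontrivial (R ⧸ Ideal.span {1 - e}) := by
  refine Ideal.Quotient.nontrivial_iff.2 fun htop => he0 ?_
  rw [Ideal.span_singleton_eq_top] at htop
  exact htop.mul_right_eq_zero.1 (by rw [sub_mul, one_mul, he.eq, sub_self])

theorem exists_lift_of_quotient_span_one_sub (he : IsIdempotentElem e)
    {x : R ⧸ Ideal.span {1 - e}} (hx : IsIdempotentElem x) :
    ∃ f, IsIdempotentElem f ∧ e * f = f ∧ Ideal.Quotient.mk _ f = x := by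
  obtain ⟨r, rfl⟩ := Ideal.Quotient.mk_surjective x
  have hr : r * r - r ∈ Ideal.span {1 - e} := by
    rw [← Ideal.Quotient.eq_zero_iff_mem, map_sub, map_mul, hx.eq, sub_self]
  obtain ⟨c, hc⟩ := Ideal.mem_span_singleton.1 hr
  refine ⟨r * e, ?_, by rw [mul_comm, mul_assoc, he.eq],
    by rw [map_mul, Ideal.Quotient.mk_span_one_sub, mul_one]⟩
  -- `(r * e) ^ 2 - r * e = (r * r - r) * e = c * (1 - e) * e = 0`
  show r * e * (r * e) = r * e
  linear_combination e * hc + (r * r - c) * he.eq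

end IsIdempotentElem

theorem IsPrimitiveIdempotent.eq_zero_or_eq_one_of_quotient {e : R}
    (he : IsPrimitiveIdempotent e) {x : R ⧸ Ideal.span {1 - e}} (hx : IsIdempotentElem x) :
    x = 0 ∨ x = 1 := by
  obtain ⟨f, hf, hef, rfl⟩ := he.1.exists_lift_of_quotient_span_one_sub hx
  by_cases hf0 : f = 0
  · exact .inl (by rw [hf0, map_zero])
  · exact .inr (by rw [← he.2.2 f hf hf0 hef, Ideal.Quotient.mk_span_one_sub])

theorem finite_isIdempotentElem_of_injective_pi {ι : Type*} [Finite ι] {S : ι → Type*}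
    [∀ i, CommRing (S i)] (φ : R →+* ∀ i, S i) (hφ : Function.Injective φ)
    (htriv : ∀ i (x : S i), IsIdempotentElem x → x = 0 ∨ x = 1) :
    Finite {e : R // IsIdempotentElem e} := by
  let code (e : {e : R // IsIdempotentElem e}) (i : ι) : ({0, 1} : Set (S i)) :=
    ⟨φ e i, htriv i _ (congrFun (e.2.map φ).eq i)⟩
  refine Finite.of_injective code fun e f h => Subtype.ext (hφ (funext fun i => ?_))
  exact congrArg Subtype.val (congrFun h i)

end

/-- A nonzero commutative ring `R` has finitely many idempotents iff there are finitely
many distinct primitive idempotents `e₁, …, eₙ` (`n ≥ 1`) summing to `1`; in that case the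
canonical map `R → ∏ₖ R/(1 - eₖ)` is an isomorphism and each `R/(1 - eₖ)` is a nonzero
ring without nontrivial idempotents. -/
theorem finite_idempotents_decomposition (R : Type*) [CommRing R] [Nontrivial R] :
    (Finite {e : R // IsIdempotentElem e} ↔
      ∃ (n : ℕ) (e : Fin n → R), 1 ≤ n ∧ (∀ k, IsPrimitiveIdempotent (e k)) ∧
        Function.Injective e ∧ ∑ k, e k = 1) ∧
    (∀ (n : ℕ) (e : Fin n → R), 1 ≤ n → (∀ k, IsPrimitiveIdempotent (e k)) →
      Function.Injective e → ∑ k, e k = 1 →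
      Function.Bijective
        (Pi.ringHom fun k => Ideal.Quotient.mk (Ideal.span {1 - e k})) ∧
      ∀ k : Fin n, Nontrivial (R ⧸ Ideal.span {1 - e k}) ∧
        ∀ x : R ⧸ Ideal.span {1 - e k}, IsIdempotentElem x → x = 0 ∨ x = 1) := by
  refine ⟨⟨fun _ => ?_, ?_⟩, fun n e _ hprim hinj hsum => ⟨?_, fun k => ?_⟩⟩
  · obtain ⟨n, e, hprim, hinj, hsum⟩ := exists_fin_isPrimitiveIdempotent_sum_eq_one (R := R)
    refine ⟨n, e, Nat.one_le_iff_ne_zero.2 ?_, hprim, hinj, hsum⟩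
    rintro rfl
    simp at hsum
  · rintro ⟨n, e, -, hprim, hinj, hsum⟩
    exact finite_isIdempotentElem_of_injective_pi _
      (completeOrthogonalIdempotents_of_isPrimitiveIdempotent hprim hinj hsum).bijective_pi.1
      fun k _ => (hprim k).eq_zero_or_eq_one_of_quotient
  · exact (completeOrthogonalIdempotents_of_isPrimitiveIdempotent hprim hinj hsum).bijective_pi
  · exact ⟨(hprim k).1.nontrivial_quotient_span_one_sub (hprim k).2.1,
      fun _ => (hprim k).eq_zero_or_eq_one_of_quotient⟩
end
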